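/- arXiv:math/0103037 — 9 statements merged into one kernel-verified Lean document; each statement's English description precedes it below -/
import Mathlib

section
/- Let u : ℂ → ℝ be a subharmonic (or more generally, continuous and satisfying the maximum principle) function on ℂ, and for L ∈ ℝ let D be a connected component of the sublevel set {ζ : u(ζ) < L}. Then D is simply connected. -/
/-!
Let `C` be a bounded component of `ℂ \ D`. Since `C` is a compact component of the closed set
`ℂ \ D`, a clopen-separation argument in a compact neighbourhood of `C` yields a bounded open
`Ω ⊇ C` whose frontier lies in `D`, so the maximum principle gives `u < L` on `C`.
As `C ≠ ℂ`, `C` touches `closure D` at some point `x`; but `x` lies in the open set `{u < L}`,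
and its component there meets `D`, so `x ∈ D`, which is absurd.
-/

open Set

variable {X : Type*} [TopologicalSpace X]

theorem IsClosed.connectedComponentIn {F : Set X} (hF : IsClosed F) (x : X) :
    IsClosed (connectedComponentIn F x) := by
  by_cases hx : x ∈ F
  · exact isClosed_of_closure_subset <|
      isPreconnected_connectedComponentIn.closure.subset_connectedComponentIn
        (subset_closure (mem_connectedComponentIn hx))
        (closure_minimal (connectedComponentIn_subset F x) hF)
  · rw [connectedComponentIn_eq_empty hx]
    exact isClosed_empty

theorem IsOpen.mem_connectedComponentIn_of_mem_closure [LocallyConnectedSpace X] {U : Set X}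
    (hU : IsOpen U) {x y : X} (hx : x ∈ U) (hxy : x ∈ closure (connectedComponentIn U y)) :
    x ∈ connectedComponentIn U y := by
  obtain ⟨w, hwx, hwy⟩ := mem_closure_iff.mp hxy _ hU.connectedComponentIn
    (mem_connectedComponentIn hx)
  rw [connectedComponentIn_eq hwy, ← connectedComponentIn_eq hwx]
  exact mem_connectedComponentIn hx

theorem exists_isClopen_mem_subset_of_connectedComponent_subset [T2Space X] [CompactSpace X]
    {x : X} {V : Set X} (hV : IsOpen V) (hxV : connectedComponent x ⊆ V) :
    ∃ Z, IsClopen Z ∧ x ∈ Z ∧ Z ⊆ V := by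
  have hempty : Vᶜ ∩ ⋂ Z : { Z : Set X // IsClopen Z ∧ x ∈ Z }, (Z : Set X) = ∅ := by
    rw [← connectedComponent_eq_iInter_isClopen, ← disjoint_iff_inter_eq_empty]
    exact disjoint_compl_left.mono_right hxV
  obtain ⟨t, ht⟩ := hV.isClosed_compl.isCompact.elim_finite_subfamily_closed _
    (fun Z => Z.2.1.isClosed) hempty
  refine ⟨⋂ Z ∈ t, (Z : Set X), isClopen_biInter_finset fun Z _ => Z.2.1,
    mem_iInter₂.mpr fun Z _ => Z.2.2, fun y hy => ?_⟩
  by_contra hyV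
  exact (eq_empty_iff_forall_notMem.mp ht) y ⟨hyV, hy⟩

theorem IsCompact.exists_isCompact_diff_isClosed_of_connectedComponentIn_subset [T2Space X]
    {F : Set X} (hF : IsCompact F) {x : X} (hx : x ∈ F) {V : Set X} (hV : IsOpen V)
    (hxV : connectedComponentIn F x ⊆ V) :
    ∃ Z, IsCompact Z ∧ IsClosed (F \ Z) ∧ connectedComponentIn F x ⊆ Z ∧ Z ⊆ V := by
  have : CompactSpace F := isCompact_iff_compactSpace.mp hF
  rw [connectedComponentIn_eq_image hx] at hxV ⊢
  obtain ⟨Z, hZ, hxZ, hZV⟩ := exists_isClopen_mem_subset_of_connectedComponent_subset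
    (hV.preimage continuous_subtype_val) (image_subset_iff.mp hxV)
  refine ⟨Subtype.val '' Z, hZ.isClosed.isCompact.image continuous_subtype_val, ?_,
    image_mono (hZ.connectedComponent_subset hxZ), image_subset_iff.mpr hZV⟩
  have hFZ : F \ Subtype.val '' Z = Subtype.val '' Zᶜ := by
    rw [image_compl_eq_range_sdiff_image Subtype.val_injective, Subtype.range_coe]
  rw [hFZ]
  exact (hZ.compl.isClosed.isCompact.image continuous_subtype_val).isClosed

theorem exists_isOpen_superset_connectedComponentIn_compl_frontier_subset
    [LocallyCompactSpace X] [T2Space X] {D : Set X} (hD : IsOpen D) {z : X} (hz : z ∉ D)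
    (hC : IsCompact (connectedComponentIn Dᶜ z)) :
    ∃ Ω, IsOpen Ω ∧ IsCompact (closure Ω) ∧ connectedComponentIn Dᶜ z ⊆ Ω ∧ frontier Ω ⊆ D := by
  obtain ⟨V, hV, hCV, -, hVc⟩ := exists_open_between_and_isCompact_closure hC isOpen_univ
    (subset_univ _)
  set F := Dᶜ ∩ closure V
  have hFC : connectedComponentIn F z = connectedComponentIn Dᶜ z :=
    subset_antisymm (connectedComponentIn_mono z inter_subset_left)
      (isPreconnected_connectedComponentIn.subset_connectedComponentIn
        (mem_connectedComponentIn hz) fun y hy =>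
          ⟨connectedComponentIn_subset _ _ hy, subset_closure (hCV hy)⟩)
  have hF : IsCompact F := hVc.inter_left hD.isClosed_compl
  obtain ⟨Z, hZ, hFZ, hCZ, hZV⟩ := hF.exists_isCompact_diff_isClosed_of_connectedComponentIn_subset
    ⟨hz, subset_closure (hCV (mem_connectedComponentIn hz))⟩ hV (hFC ▸ hCV)
  obtain ⟨Ω, hΩ, hZΩ, hΩO, hΩc⟩ := exists_open_between_and_isCompact_closure hZ
    (hV.sdiff hFZ) fun y hy => ⟨hZV hy, fun h => h.2 hy⟩
  refine ⟨Ω, hΩ, hΩc, hFC ▸ hCZ.trans hZΩ, fun w hw => ?_⟩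
  rw [hΩ.frontier_eq] at hw
  obtain ⟨hwV, hwFZ⟩ := hΩO hw.1
  by_contra hwD
  exact hwFZ ⟨⟨hwD, subset_closure hwV⟩, fun hwZ => hw.2 (hZΩ hwZ)⟩

theorem exists_mem_connectedComponentIn_compl_inter_closure [PreconnectedSpace X]
    [LocallyConnectedSpace X] {D : Set X} (hD : IsOpen D) {z : X} (hz : z ∉ D)
    (hC : connectedComponentIn Dᶜ z ≠ univ) :
    (connectedComponentIn Dᶜ z ∩ closure D).Nonempty := by
  by_contra hdisj
  have hsub : connectedComponentIn Dᶜ z ⊆ (closure D)ᶜ := fun y hy hyD => hdisj ⟨y, hy, hyD⟩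
  have hopen : IsOpen (connectedComponentIn Dᶜ z) := by
    rw [subset_antisymm (isPreconnected_connectedComponentIn.subset_connectedComponentIn
      (mem_connectedComponentIn hz) hsub)
      (connectedComponentIn_mono z (compl_subset_compl.mpr subset_closure))]
    exact isClosed_closure.isOpen_compl.connectedComponentIn
  exact hC (IsClopen.eq_univ ⟨hD.isClosed_compl.connectedComponentIn z, hopen⟩
    ⟨z, mem_connectedComponentIn hz⟩)

theorem stmt0_general (u : ℂ → ℝ) (hu : Continuous u)
    (hmax : ∀ V : Set ℂ, IsOpen V → Bornology.IsBounded V → ∀ z ∈ V,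
      ∃ w ∈ frontier V, u z ≤ u w)
    (L : ℝ) (ζ₀ : ℂ) (D : Set ℂ)
    (hD : D = connectedComponentIn {ζ : ℂ | u ζ < L} ζ₀) :
    ∀ z ∉ D, ¬ Bornology.IsBounded (connectedComponentIn Dᶜ z) := by
  intro z hz hb
  have hU : IsOpen {ζ : ℂ | u ζ < L} := isOpen_lt hu continuous_const
  have hDopen : IsOpen D := hD ▸ hU.connectedComponentIn
  have hDU : D ⊆ {ζ : ℂ | u ζ < L} := hD ▸ connectedComponentIn_subset _ _
  have hC : IsCompact (connectedComponentIn Dᶜ z) :=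
    Metric.isCompact_of_isClosed_isBounded (hDopen.isClosed_compl.connectedComponentIn z) hb
  obtain ⟨Ω, hΩ, hΩc, hCΩ, hΩD⟩ :=
    exists_isOpen_superset_connectedComponentIn_compl_frontier_subset hDopen hz hC
  have hΩU : ∀ y ∈ Ω, u y < L := fun y hy => by
    obtain ⟨w, hw, hyw⟩ := hmax Ω hΩ (hΩc.isBounded.subset subset_closure) y hy
    exact hyw.trans_lt (hDU (hΩD hw))
  obtain ⟨x, hxC, hxD⟩ := exists_mem_connectedComponentIn_compl_inter_closure hDopen hz
    fun h => NormedSpace.unbounded_univ ℝ ℂ (h ▸ hb)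
  have hxD' : x ∈ D := hD ▸ hU.mem_connectedComponentIn_of_mem_closure
    (hΩU x (hCΩ hxC)) (hD ▸ hxD)
  exact connectedComponentIn_subset _ _ hxC hxD'

/-- If `u : ℂ → ℝ` is continuous and satisfies the maximum principle (as subharmonic
functions do), then every connected component `D` of a sublevel set `{ζ | u ζ < L}`
is simply connected, in the sense that no connected component of the complement of
`D` in `ℂ` is bounded. -/
theorem stmt0 (u : ℂ → ℝ) (hu : Continuous u)
    (hmax : ∀ V : Set ℂ, IsOpen V → Bornology.IsBounded V → ∀ z ∈ V,
      ∃ w ∈ frontier V, u z ≤ u w)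
    (L : ℝ) (ζ₀ : ℂ) (h0 : u ζ₀ < L) (D : Set ℂ)
    (hD : D = connectedComponentIn {ζ : ℂ | u ζ < L} ζ₀) :
    ∀ z ∉ D, ¬ Bornology.IsBounded (connectedComponentIn Dᶜ z) :=
  stmt0_general u hu hmax L ζ₀ D hD
end

section
/- Suppose d > 1 and κ > 1, and for each x in an index set S there is a continuous increasing function m_x : [0,∞) → [0,∞) with m_x(0) = 0, m_x(1) = 1, and multipliers λ_x with |λ_x| ≥ κ, satisfying the transformation law d · m_x(r) = m_{fx}(|λ_x| r) for a self-map f of S. Then for all x ∈ S and all r ≥ 1, m_x(r) ≤ C r^β where β = log d / log κ and C = κ^β = d. -/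
/-! Pulling `r ≥ 1` back along `f` divides the radius by at least `κ` and the value of `m` by `d`.
After `n = ⌈log_κ r⌉` steps the radius is at most `1`, where `m ≤ 1`, so `m_x(r) ≤ dⁿ`, and
`dⁿ ≤ d · d^(log_κ r) = d · r^(log d / log κ)`. -/

open Real

section Iterate

variable {S : Type*} {f : S → S} {m : S → ℝ → ℝ} {d κ : ℝ}

theorem apply_iterate_pow_mul_le (hd : 0 ≤ d) (hκ : 0 ≤ κ)
    (hstep : ∀ x s, 0 ≤ s → m (f x) (κ * s) ≤ d * m x s) (n : ℕ) (x : S) {s : ℝ}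
    (hs : 0 ≤ s) : m (f^[n] x) (κ ^ n * s) ≤ d ^ n * m x s := by
  induction n with
  | zero => simp
  | succ n ih =>
    calc m (f^[n + 1] x) (κ ^ (n + 1) * s)
        = m (f (f^[n] x)) (κ * (κ ^ n * s)) := by
          rw [Function.iterate_succ_apply', pow_succ, mul_comm _ κ, mul_assoc]
      _ ≤ d * m (f^[n] x) (κ ^ n * s) := hstep _ _ (by positivity)
      _ ≤ d * (d ^ n * m x s) := mul_le_mul_of_nonneg_left ih hd
      _ = d ^ (n + 1) * m x s := by ring

theorem apply_le_pow_of_le_pow (hf : Function.Surjective f) (hmono : ∀ x, Monotone (m x))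
    (h1 : ∀ x, m x 1 = 1) (hd : 0 ≤ d) (hκ : 0 ≤ κ)
    (hstep : ∀ x s, 0 ≤ s → m (f x) (κ * s) ≤ d * m x s) (y : S) {r : ℝ} {n : ℕ}
    (hr : r ≤ κ ^ n) : m y r ≤ d ^ n := by
  obtain ⟨x, rfl⟩ := hf.iterate n y
  calc m (f^[n] x) r ≤ m (f^[n] x) (κ ^ n * 1) := hmono _ (by rwa [mul_one])
    _ ≤ d ^ n * m x 1 := apply_iterate_pow_mul_le hd hκ hstep n x zero_le_one
    _ = d ^ n := by rw [h1, mul_one]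

end Iterate

namespace Real

theorem le_pow_natCeil_logb {κ r : ℝ} (hκ : 1 < κ) (hr : 0 < r) : r ≤ κ ^ ⌈logb κ r⌉₊ := by
  calc r = κ ^ logb κ r := (rpow_logb (by linarith) hκ.ne' hr).symm
    _ ≤ κ ^ (⌈logb κ r⌉₊ : ℝ) := rpow_le_rpow_of_exponent_le hκ.le (Nat.le_ceil _)
    _ = κ ^ ⌈logb κ r⌉₊ := rpow_natCast _ _

theorem pow_natCeil_logb_le {d κ r : ℝ} (hd : 1 ≤ d) (hκ : 1 < κ) (hr : 1 ≤ r) :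
    d ^ ⌈logb κ r⌉₊ ≤ d * r ^ (log d / log κ) := by
  have hd0 : 0 < d := by linarith
  have hr0 : 0 < r := by linarith
  -- `d ^ logb κ r` and `r ^ logb κ d` are both `exp (log d * log r / log κ)`.
  have hswap : d ^ logb κ r = r ^ (log d / log κ) := by
    rw [rpow_def_of_pos hd0, rpow_def_of_pos hr0, logb]
    ring_nf
  calc d ^ ⌈logb κ r⌉₊ = d ^ (⌈logb κ r⌉₊ : ℝ) := (rpow_natCast _ _).symm
    _ ≤ d ^ (logb κ r + 1) :=
      rpow_le_rpow_of_exponent_le hd (Nat.ceil_lt_add_one (logb_nonneg hκ hr)).le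
    _ = d * r ^ (log d / log κ) := by rw [rpow_add hd0, rpow_one, hswap, mul_comm]

end Real

theorem stmt2_general {S : Type*} (f : S ≃ S) (m : S → ℝ → ℝ) (lam : S → ℂ)
    (d κ : ℝ) (hd : 1 < d) (hκ : 1 < κ)
    (hmono : ∀ x, Monotone (m x))
    (h1 : ∀ x, m x 1 = 1)
    (hlam : ∀ x, κ ≤ ‖lam x‖)
    (htrans : ∀ x r, d * m x r = m (f x) (‖lam x‖ * r)) :
    ∀ x, ∀ r : ℝ, 1 ≤ r → m x r ≤ d * r ^ (Real.log d / Real.log κ) := by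
  have hstep : ∀ x s, 0 ≤ s → m (f x) (κ * s) ≤ d * m x s := fun x s hs =>
    htrans x s ▸ hmono _ (mul_le_mul_of_nonneg_right (hlam x) hs)
  intro x r hr
  calc m x r ≤ d ^ ⌈logb κ r⌉₊ :=
        apply_le_pow_of_le_pow f.surjective hmono h1 (by linarith) (by linarith) hstep x
          (le_pow_natCeil_logb hκ (by linarith))
    _ ≤ d * r ^ (log d / log κ) := pow_natCeil_logb_le hd.le hκ hr

/-- Theorem 1.2, (4) ⇒ (5): if `d·m_x(r) = m_{fx}(|λ_x| r)` with `m_x(1) = 1` and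
`|λ_x| ≥ κ > 1`, then `m_x(r) ≤ C r^β` for all `r ≥ 1`, where `β = log d / log κ`
and `C = κ^β = d`. -/
theorem stmt2 {S : Type*} (f : S ≃ S) (m : S → ℝ → ℝ) (lam : S → ℂ)
    (d κ : ℝ) (hd : 1 < d) (hκ : 1 < κ)
    (hcont : ∀ x, Continuous (m x)) (hmono : ∀ x, Monotone (m x))
    (hnonneg : ∀ x r, 0 ≤ m x r)
    (h0 : ∀ x, m x 0 = 0) (h1 : ∀ x, m x 1 = 1)
    (hlam : ∀ x, κ ≤ ‖lam x‖)
    (htrans : ∀ x r, d * m x r = m (f x) (‖lam x‖ * r)) :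
    ∀ x, ∀ r : ℝ, 1 ≤ r → m x r ≤ d * r ^ (Real.log d / Real.log κ) :=
  stmt2_general f m lam d κ hd hκ hmono h1 hlam htrans
end

section
/- Under the same transformation-law hypotheses (d·m_x(r) = m_{fx}(|λ_x| r), m_x(1) = 1, |λ_x| ≥ κ > 1 for all x ∈ S), for every x ∈ S and every 0 < r < 1 one has m_x(r) ≥ r^β / d, where β = log d / log κ. -/
/-!
Iterating the transformation law `n` times gives `dⁿ · m_x(r) = m_y(Λ r)` with `Λ ≥ κⁿ`, so as soon
as `κⁿ r ≥ 1` monotonicity and `m_y(1) = 1` give `m_x(r) ≥ d⁻ⁿ`. The least such `n` is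
`⌈log_κ (1/r)⌉`, and `r^β = d^(log_κ r)` with `n < log_κ (1/r) + 1` turns `d⁻ⁿ` into `r^β / d`.
-/

open Real

theorem one_le_pow_mul_of_one_le_pow_mul {S : Type*} (f : S → S) (m : S → ℝ → ℝ) (a : S → ℝ)
    {d κ : ℝ} (hκ : 0 ≤ κ) (hmono : ∀ x, Monotone (m x)) (h1 : ∀ x, 1 ≤ m x 1)
    (ha : ∀ x, κ ≤ a x) (htrans : ∀ x r, d * m x r = m (f x) (a x * r)) (n : ℕ) :
    ∀ {x : S} {r : ℝ}, 0 ≤ r → 1 ≤ κ ^ n * r → 1 ≤ d ^ n * m x r := by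
  induction n with
  | zero =>
    intro x r _ hr
    simpa using (h1 x).trans (hmono x (by simpa using hr))
  | succ n ih =>
    intro x r hr hnr
    have hstep : κ ^ (n + 1) * r ≤ κ ^ n * (a x * r) := by
      rw [pow_succ, mul_assoc]
      gcongr
      exact ha x
    calc 1 ≤ d ^ n * m (f x) (a x * r) :=
          ih (mul_nonneg (hκ.trans (ha x)) hr) (hnr.trans hstep)
      _ = d ^ (n + 1) * m x r := by rw [← htrans, pow_succ, mul_assoc]

theorem rpow_log_div_log {d κ r : ℝ} (hd : 0 < d) (hr : 0 < r) :
    r ^ (log d / log κ) = d ^ logb κ r := by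
  rw [rpow_def_of_pos hr, rpow_def_of_pos hd, logb]
  ring_nf

theorem one_le_pow_ceil_logb_inv_mul {κ r : ℝ} (hκ : 1 < κ) (hr : 0 < r) :
    1 ≤ κ ^ ⌈logb κ r⁻¹⌉₊ * r := by
  have hpow : r⁻¹ ≤ κ ^ ⌈logb κ r⁻¹⌉₊ := by
    calc r⁻¹ = κ ^ logb κ r⁻¹ := (rpow_logb (by linarith) hκ.ne' (inv_pos.2 hr)).symm
      _ ≤ κ ^ (⌈logb κ r⁻¹⌉₊ : ℝ) := rpow_le_rpow_of_exponent_le hκ.le (Nat.le_ceil _)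
      _ = κ ^ ⌈logb κ r⁻¹⌉₊ := rpow_natCast _ _
  rwa [inv_le_iff_one_le_mul₀ hr] at hpow

theorem rpow_logb_div_le_inv_pow_ceil {d κ r : ℝ} (hd : 1 < d) (hκ : 1 < κ) (hr : 0 < r)
    (hr1 : r ≤ 1) :
    d ^ logb κ r / d ≤ (d ^ ⌈logb κ r⁻¹⌉₊)⁻¹ := by
  have ht : 0 ≤ logb κ r⁻¹ := logb_nonneg hκ (one_le_inv₀ hr |>.2 hr1)
  have hceil := Nat.ceil_lt_add_one ht
  rw [← neg_neg (logb κ r), ← logb_inv, ← rpow_sub_one (by linarith), ← rpow_natCast,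
    ← rpow_neg (by linarith), rpow_le_rpow_left_iff hd]
  linarith

theorem stmt3_general {S : Type*} (f : S ≃ S) (m : S → ℝ → ℝ) (lam : S → ℂ)
    (d κ : ℝ) (hd : 1 < d) (hκ : 1 < κ)
    (hmono : ∀ x, Monotone (m x))
    (h1 : ∀ x, m x 1 = 1)
    (hlam : ∀ x, κ ≤ ‖lam x‖)
    (htrans : ∀ x r, d * m x r = m (f x) (‖lam x‖ * r)) :
    ∀ x, ∀ r : ℝ, 0 < r → r < 1 →
      r ^ (Real.log d / Real.log κ) / d ≤ m x r := by
  intro x r hr hr1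
  set n := ⌈logb κ r⁻¹⌉₊
  have hiterate : 1 ≤ d ^ n * m x r :=
    one_le_pow_mul_of_one_le_pow_mul f m (fun x => ‖lam x‖) (by linarith) hmono
      (fun x => (h1 x).ge) hlam htrans n hr.le (one_le_pow_ceil_logb_inv_mul hκ hr)
  calc r ^ (log d / log κ) / d = d ^ logb κ r / d := by rw [rpow_log_div_log (by linarith) hr]
    _ ≤ (d ^ n)⁻¹ := rpow_logb_div_le_inv_pow_ceil hd hκ hr hr1.le
    _ ≤ m x r := (inv_le_iff_one_le_mul₀' (by positivity)).2 hiterate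

/-- Proposition 1.5: under the transformation law `d·m_x(r) = m_{fx}(|λ_x| r)` with
`m_x(1) = 1` and `|λ_x| ≥ κ > 1`, for every `0 < r < 1` one has
`m_x(r) ≥ r^β / d` where `β = log d / log κ`. -/
theorem stmt3 {S : Type*} (f : S ≃ S) (m : S → ℝ → ℝ) (lam : S → ℂ)
    (d κ : ℝ) (hd : 1 < d) (hκ : 1 < κ)
    (hcont : ∀ x, Continuous (m x)) (hmono : ∀ x, Monotone (m x))
    (hnonneg : ∀ x r, 0 ≤ m x r)
    (h0 : ∀ x, m x 0 = 0) (h1 : ∀ x, m x 1 = 1)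
    (hlam : ∀ x, κ ≤ ‖lam x‖)
    (htrans : ∀ x r, d * m x r = m (f x) (‖lam x‖ * r)) :
    ∀ x, ∀ r : ℝ, 0 < r → r < 1 →
      r ^ (Real.log d / Real.log κ) / d ≤ m x r :=
  stmt3_general f m lam d κ hd hκ hmono h1 hlam htrans
end

section
/- Let F : [R₀, R₁] → [0,∞) be a C¹ increasing function with 0 < R₀ < R₁ such that r ↦ F(r)/r² is nondecreasing on [R₀, R₁]. Then ∫_{R₀}^{R₁} F'(r)/r² dr ≤ (F(R₁)/R₁²)·(1 + 2·log(R₁/R₀)). -/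
/-- The area estimate in the proof of Theorem 3.1: if `F` is C¹, increasing,
nonnegative, and `F(r)/r²` is nondecreasing on `[R₀, R₁]`, then
`∫_{R₀}^{R₁} F'(r)/r² dr ≤ (F(R₁)/R₁²)·(1 + 2 log(R₁/R₀))`. -/
theorem stmt5 (R₀ R₁ : ℝ) (h0 : 0 < R₀) (h01 : R₀ < R₁) (F F' : ℝ → ℝ)
    (hderiv : ∀ r ∈ Set.Icc R₀ R₁, HasDerivAt F (F' r) r)
    (hF'cont : ContinuousOn F' (Set.Icc R₀ R₁))
    (hF'nonneg : ∀ r ∈ Set.Icc R₀ R₁, 0 ≤ F' r)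
    (hFnonneg : ∀ r ∈ Set.Icc R₀ R₁, 0 ≤ F r)
    (hmono : MonotoneOn (fun r => F r / r ^ 2) (Set.Icc R₀ R₁)) :
    (∫ r in R₀..R₁, F' r / r ^ 2) ≤
      (F R₁ / R₁ ^ 2) * (1 + 2 * Real.log (R₁ / R₀)) := by
  have hle : R₀ ≤ R₁ := h01.le
  have huIcc : Set.uIcc R₀ R₁ = Set.Icc R₀ R₁ := Set.uIcc_of_le hle
  have hpos : ∀ r ∈ Set.Icc R₀ R₁, 0 < r := fun r hr => h0.trans_le hr.1
  have hFcont : ContinuousOn F (Set.Icc R₀ R₁) :=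
    fun r hr => (hderiv r hr).continuousAt.continuousWithinAt
  set C : ℝ := F R₁ / R₁ ^ 2 with hC
  have hR₁mem : R₁ ∈ Set.Icc R₀ R₁ := ⟨hle, le_rfl⟩
  have hR₀mem : R₀ ∈ Set.Icc R₀ R₁ := ⟨le_rfl, hle⟩
  -- derivative of r ↦ (r^2)⁻¹
  have hv : ∀ r ∈ Set.Icc R₀ R₁,
      HasDerivAt (fun x : ℝ => (x ^ 2)⁻¹) (-(2 * r) / (r ^ 2) ^ 2) r := by
    intro r hr
    have h2 : HasDerivAt (fun x : ℝ => x ^ 2) (2 * r) r := by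
      simpa using hasDerivAt_pow 2 r
    exact h2.inv (pow_ne_zero _ (hpos r hr).ne')
  have hcont2 : ContinuousOn (fun x : ℝ => (x ^ 2)⁻¹) (Set.Icc R₀ R₁) :=
    (continuousOn_pow 2).inv₀ (fun r hr => pow_ne_zero _ (hpos r hr).ne')
  have hcontv' : ContinuousOn (fun x : ℝ => -(2 * x) / (x ^ 2) ^ 2) (Set.Icc R₀ R₁) :=
    ((continuous_const.mul continuous_id).neg.continuousOn).div
      ((continuousOn_pow 2).pow 2) (fun r hr => pow_ne_zero _ (pow_ne_zero _ (hpos r hr).ne'))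
  have hint1 : IntervalIntegrable (fun x => F' x * (x ^ 2)⁻¹) MeasureTheory.volume R₀ R₁ :=
    ((hF'cont.mul hcont2).mono huIcc.subset).intervalIntegrable
  have hint2 : IntervalIntegrable (fun x => F x * (-(2 * x) / (x ^ 2) ^ 2))
      MeasureTheory.volume R₀ R₁ :=
    ((hFcont.mul hcontv').mono huIcc.subset).intervalIntegrable
  have key : (∫ x in R₀..R₁, F' x * (x ^ 2)⁻¹ + F x * (-(2 * x) / (x ^ 2) ^ 2))
      = F R₁ * (R₁ ^ 2)⁻¹ - F R₀ * (R₀ ^ 2)⁻¹ := by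
    apply intervalIntegral.integral_deriv_mul_eq_sub
      (fun x hx => hderiv x (huIcc ▸ hx)) (fun x hx => hv x (huIcc ▸ hx)) _ _
    · exact (hF'cont.mono huIcc.subset).intervalIntegrable
    · exact (hcontv'.mono huIcc.subset).intervalIntegrable
  have hsplit : (∫ x in R₀..R₁, F' x * (x ^ 2)⁻¹)
      = F R₁ * (R₁ ^ 2)⁻¹ - F R₀ * (R₀ ^ 2)⁻¹
        - ∫ x in R₀..R₁, F x * (-(2 * x) / (x ^ 2) ^ 2) := by
    rw [← key, intervalIntegral.integral_add hint1 hint2]; ring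
  -- bound the second integral
  have hbound : (∫ x in R₀..R₁, -(F x * (-(2 * x) / (x ^ 2) ^ 2)))
      ≤ ∫ x in R₀..R₁, 2 * C * x⁻¹ := by
    apply intervalIntegral.integral_mono_on hle hint2.neg
    · exact ((continuousOn_const.mul ((continuous_id.continuousOn).inv₀
        (fun r hr => (hpos r (huIcc ▸ hr)).ne')))).intervalIntegrable
    · intro x hx
      have hx0 : 0 < x := hpos x hx
      have h1 : F x / x ^ 2 ≤ C := hmono hx hR₁mem hx.2
      have : -(F x * (-(2 * x) / (x ^ 2) ^ 2)) = (F x / x ^ 2) * (2 * x⁻¹) := by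
        field_simp
      simp only [Pi.neg_apply]
      rw [this]
      have h2 : (0:ℝ) ≤ 2 * x⁻¹ := by positivity
      calc F x / x ^ 2 * (2 * x⁻¹) ≤ C * (2 * x⁻¹) := mul_le_mul_of_nonneg_right h1 h2
        _ = 2 * C * x⁻¹ := by ring
  have hlogint : (∫ x in R₀..R₁, 2 * C * x⁻¹) = 2 * C * Real.log (R₁ / R₀) := by
    rw [intervalIntegral.integral_const_mul, integral_inv_of_pos h0 (h0.trans h01)]
  have hF₀ : 0 ≤ F R₀ * (R₀ ^ 2)⁻¹ := by
    have := hFnonneg R₀ hR₀mem; positivity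
  have heq : (∫ r in R₀..R₁, F' r / r ^ 2) = ∫ x in R₀..R₁, F' x * (x ^ 2)⁻¹ := by
    simp [div_eq_mul_inv]
  rw [heq, hsplit]
  have := hbound.trans_eq hlogint
  rw [intervalIntegral.integral_neg] at this
  have hCval : F R₁ * (R₁ ^ 2)⁻¹ = C := by rw [hC, div_eq_mul_inv]
  nlinarith [this, hF₀]
end

section
/- Let c¹, c² be cocycles over f : S → S that are boundedly cohomologous (c¹(x,1)−c²(x,1) = α(fx)−α(x) with |α| ≤ C). If c¹ is eventually positive, i.e. there exist n ≥ 1 and K > 0 with c¹(x,n) ≥ K for all x ∈ S, then c² is eventually positive: there exist N ≥ 1 and K' > 0 with c²(x,N) ≥ K' for all x ∈ S. In fact one may take N = nk for any k with kK > 2C, and K' = kK − 2C. -/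
/-- Lemma 4.5: a cocycle boundedly cohomologous to an eventually positive cocycle
is eventually positive; one may take `N = n k` for any `k` with `k K > 2 C`, and
`K' = k K − 2 C`. -/
theorem stmt9 {S : Type*} (f : Equiv.Perm S) (c₁ c₂ : S → ℤ → ℝ)
    (α : S → ℝ) (C K : ℝ) (n : ℕ) (hn : 1 ≤ n) (hK : 0 < K) (hC : 0 ≤ C)
    (hc₁ : ∀ x (p q : ℤ), c₁ x (p + q) = c₁ x p + c₁ ((f ^ p) x) q)
    (hc₂ : ∀ x (p q : ℤ), c₂ x (p + q) = c₂ x p + c₂ ((f ^ p) x) q)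
    (hα : ∀ x, |α x| ≤ C)
    (hrel : ∀ x, c₁ x 1 - c₂ x 1 = α (f x) - α x)
    (hpos : ∀ x, K ≤ c₁ x (n : ℤ)) :
    (∀ k : ℕ, 2 * C < (k : ℝ) * K →
      ∀ x, (k : ℝ) * K - 2 * C ≤ c₂ x ((n * k : ℕ) : ℤ)) ∧
    ∃ N : ℕ, 1 ≤ N ∧ ∃ K' : ℝ, 0 < K' ∧ ∀ x, K' ≤ c₂ x (N : ℤ) := by
  have h10 : ∀ x, c₁ x 0 = 0 := by
    intro x; have := hc₁ x 0 0; simp at this; linarith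
  have h20 : ∀ x, c₂ x 0 = 0 := by
    intro x; have := hc₂ x 0 0; simp at this; linarith
  -- telescoping of the cohomology relation
  have tel : ∀ (m : ℕ) x, c₁ x (m : ℤ) - c₂ x (m : ℤ) = α ((f ^ m) x) - α x := by
    intro m
    induction m with
    | zero => intro x; simp [h10, h20]
    | succ m ih =>
        intro x
        have e1 := hc₁ x (m : ℤ) 1
        have e2 := hc₂ x (m : ℤ) 1
        rw [zpow_natCast] at e1 e2
        have hr := hrel ((f ^ m) x)
        have hfx : f ((f ^ m) x) = (f ^ (m + 1)) x := by
          rw [pow_succ']; rfl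
        have ihm := ih x
        have ec : ((m + 1 : ℕ) : ℤ) = (m : ℤ) + 1 := by push_cast; ring
        rw [ec, e1, e2, ← hfx] at *
        rw [e1, e2]
        linarith
  -- growth of c₁
  have grow : ∀ (k : ℕ) x, (k : ℝ) * K ≤ c₁ x ((n * k : ℕ) : ℤ) := by
    intro k
    induction k with
    | zero => intro x; simp [h10]
    | succ k ih =>
        intro x
        have e : ((n * (k + 1) : ℕ) : ℤ) = ((n * k : ℕ) : ℤ) + (n : ℤ) := by
          push_cast; ring
        have e1 := hc₁ x ((n * k : ℕ) : ℤ) (n : ℤ)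
        rw [zpow_natCast] at e1
        have h1 := ih x
        have h2 := hpos ((f ^ (n * k)) x)
        rw [e, e1, Nat.cast_succ]
        linarith
  have main : ∀ k : ℕ, 2 * C < (k : ℝ) * K →
      ∀ x, (k : ℝ) * K - 2 * C ≤ c₂ x ((n * k : ℕ) : ℤ) := by
    intro k _ x
    have h1 := grow k x
    have h2 := tel (n * k) x
    have h3 := hα ((f ^ (n * k)) x)
    have h4 := hα x
    have h3' := abs_le.1 h3
    have h4' := abs_le.1 h4
    linarith [h3'.1, h3'.2, h4'.1, h4'.2]
  refine ⟨main, ?_⟩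
  obtain ⟨k, hk⟩ := exists_nat_gt (2 * C / K)
  have hk' : 2 * C < (k : ℝ) * K := by
    have := (div_lt_iff₀ hK).1 hk
    linarith
  have hkpos : 0 < k := by
    by_contra h
    push_neg at h
    interval_cases k
    simp at hk'
    nlinarith
  refine ⟨n * k, Nat.one_le_iff_ne_zero.2 (by positivity), (k : ℝ) * K - 2 * C, by linarith, main k hk'⟩
end

section
/- Let p : ℂ → ℂ be an entire function such that every fiber p^{-1}(w) has cardinality at most k (for some fixed k ∈ ℕ, k ≥ 1). Then p is a polynomial of degree at most k. -/
/-!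
Finite fibres make `p` nonconstant, hence an open map. By Baire the open sets `p {‖z‖ > n}`
cannot all be dense, since a point in all of them would have an unbounded fibre; so near infinity
`p` omits a disc `B(w, ε)`. Then `ζ ↦ (p ζ⁻¹ - w)⁻¹` is bounded near `0`, its singularity is
removable and it vanishes there to some finite order `m`, so `p z - w = O(‖z‖ ^ m)` and `p` is a
polynomial by Liouville's theorem. Finally, a generic fibre of a polynomial of degree `d` in
characteristic zero consists of `d` simple roots, so `d ≤ k`.
-/

open Filter Bornology Asymptotics Polynomial Set
open scoped Topology

theorem Asymptotics.isBigO_one_pow_cobounded (m : ℕ) :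
    (fun _ : ℂ => (1 : ℂ)) =O[cobounded ℂ] (· ^ m) :=
  IsBigO.of_bound 1 <| (tendsto_norm_cobounded_atTop.eventually_ge_atTop 1).mono
    fun z hz => by simpa using one_le_pow₀ hz

theorem Differentiable.exists_polynomial_of_isBigO_pow {f : ℂ → ℂ} (hf : Differentiable ℂ f)
    {n : ℕ} (hO : f =O[cobounded ℂ] (· ^ n)) :
    ∃ q : ℂ[X], q.natDegree ≤ n ∧ ∀ z, f z = q.eval z := by
  induction n generalizing f with
  | zero =>
    have hb : IsBounded (range f) := by
      rw [hf.continuous.isBounded_range_iff_isBigO, ← Metric.cobounded_eq_cocompact]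
      exact hO.trans ((isBigO_const_one ℝ (1 : ℂ) _).congr_left fun z => (pow_zero z).symm)
    obtain ⟨c, hc⟩ := hf.exists_const_forall_eq_of_bounded hb
    exact ⟨C c, by simp, by simpa using hc⟩
  | succ n ih =>
    have hg : Differentiable ℂ (dslope f 0) := by
      rw [← differentiableOn_univ, Complex.differentiableOn_dslope univ_mem]
      exact hf.differentiableOn
    have hsub : (fun z => f z - f 0) =O[cobounded ℂ] (· ^ (n + 1)) :=
      hO.sub ((isBigO_const_one ℂ (f 0) _).trans (isBigO_one_pow_cobounded _))
    have hgO : dslope f 0 =O[cobounded ℂ] (· ^ n) := by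
      refine ((isBigO_refl (·⁻¹) _).mul hsub).congr' ?_ ?_ <;>
        filter_upwards [eventually_ne_cobounded 0] with z hz
      · rw [← sub_smul_dslope f 0 z, sub_zero, smul_eq_mul, inv_mul_cancel_left₀ hz]
      · rw [pow_succ', inv_mul_cancel_left₀ hz]
    obtain ⟨q, hqn, hq⟩ := ih hg hgO
    refine ⟨C (f 0) + X * q, ?_, fun z => ?_⟩
    · refine (natDegree_add_le _ _).trans (max_le (by simp) ?_)
      exact natDegree_mul_le.trans (by rw [natDegree_X]; omega)
    · have hfz := sub_smul_dslope f 0 z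
      simp only [sub_zero, smul_eq_mul] at hfz
      simp [← hq, hfz]

theorem AnalyticAt.exists_pos_mul_pow_le_norm_of_analyticOrderAt_ne_top {𝕜 E : Type*}
    [NontriviallyNormedField 𝕜] [NormedAddCommGroup E] [NormedSpace 𝕜 E] {G : 𝕜 → E} {z₀ : 𝕜}
    (hG : AnalyticAt 𝕜 G z₀) (hord : analyticOrderAt G z₀ ≠ ⊤) :
    ∃ m : ℕ, ∃ c > 0, ∀ᶠ z in 𝓝 z₀, c * ‖z - z₀‖ ^ m ≤ ‖G z‖ := by
  obtain ⟨m, hm⟩ := ENat.ne_top_iff_exists.mp hord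
  obtain ⟨h, hh, hh0, hGh⟩ := hG.analyticOrderAt_eq_natCast.mp hm.symm
  have hlow : ∀ᶠ z in 𝓝 z₀, ‖h z₀‖ / 2 ≤ ‖h z‖ :=
    hh.continuousAt.norm.eventually_const_le (half_lt_self (norm_pos_iff.mpr hh0))
  refine ⟨m, ‖h z₀‖ / 2, by positivity, ?_⟩
  filter_upwards [hGh, hlow] with z hz hlz
  rw [hz, norm_smul, norm_pow, mul_comm]
  gcongr

theorem Complex.exists_pos_mul_pow_le_norm_of_isBoundedUnder {E : Type*} [NormedAddCommGroup E]
    [NormedSpace ℂ E] [CompleteSpace E] {F : ℂ → E} {z₀ : ℂ}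
    (hd : ∀ᶠ z in 𝓝[≠] z₀, DifferentiableAt ℂ F z)
    (hb : IsBoundedUnder (· ≤ ·) (𝓝[≠] z₀) (‖F ·‖)) (hne : ∀ᶠ z in 𝓝[≠] z₀, F z ≠ 0) :
    ∃ m : ℕ, ∃ c > 0, ∀ᶠ z in 𝓝[≠] z₀, c * ‖z - z₀‖ ^ m ≤ ‖F z‖ := by
  classical
  set G := Function.update F z₀ (limUnder (𝓝[≠] z₀) F)
  have hGF : ∀ᶠ z in 𝓝[≠] z₀, G z = F z :=
    eventually_nhdsWithin_of_forall fun z hz => Function.update_of_ne hz _ _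
  have hGd : ∀ᶠ z in 𝓝[≠] z₀, DifferentiableAt ℂ G z := by
    filter_upwards [hd, self_mem_nhdsWithin] with z hz hz₀
    exact hz.congr_of_eventuallyEq <| (eventually_ne_nhds hz₀).mono
      fun w hw => Function.update_of_ne hw _ _
  have hGc : ContinuousAt G z₀ := by
    refine continuousAt_update_same.mpr
      (Complex.tendsto_limUnder_of_differentiable_on_punctured_nhds_of_bounded_under hd ?_)
    obtain ⟨M, hM⟩ := hb
    exact ⟨M + ‖F z₀‖, eventually_map.mpr <| (eventually_map.mp hM).mono fun z hz =>
      (norm_sub_le _ _).trans (by simpa using hz)⟩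
  have hGa : AnalyticAt ℂ G z₀ :=
    Complex.analyticAt_of_differentiable_on_punctured_nhds_of_continuousAt hGd hGc
  have hord : analyticOrderAt G z₀ ≠ ⊤ := by
    intro htop
    obtain ⟨z, hz0, hzF, hzne⟩ := ((analyticOrderAt_eq_top.mp htop).filter_mono
      nhdsWithin_le_nhds |>.and (hGF.and hne)).exists
    exact hzne (hzF ▸ hz0)
  obtain ⟨m, c, hc, hlow⟩ := hGa.exists_pos_mul_pow_le_norm_of_analyticOrderAt_ne_top hord
  exact ⟨m, c, hc, (hlow.filter_mono nhdsWithin_le_nhds).and hGF |>.mono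
    fun z ⟨hz, hGz⟩ => hGz ▸ hz⟩

theorem Differentiable.exists_isBigO_pow_of_eventually_le_norm_sub {f : ℂ → ℂ}
    (hf : Differentiable ℂ f) {w : ℂ} {ε : ℝ} (hε : 0 < ε)
    (h : ∀ᶠ z in cobounded ℂ, ε ≤ ‖f z - w‖) :
    ∃ m : ℕ, (fun z => f z - w) =O[cobounded ℂ] (· ^ m) := by
  have h' : ∀ᶠ ζ in 𝓝[≠] (0 : ℂ), ε ≤ ‖f ζ⁻¹ - w‖ := tendsto_inv₀_nhdsNE_zero.eventually h
  have hne : ∀ᶠ ζ in 𝓝[≠] (0 : ℂ), f ζ⁻¹ - w ≠ 0 :=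
    h'.mono fun ζ hζ => norm_pos_iff.mp (hε.trans_le hζ)
  obtain ⟨m, c, hc, hlow⟩ := Complex.exists_pos_mul_pow_le_norm_of_isBoundedUnder
    (F := fun ζ => (f ζ⁻¹ - w)⁻¹) (z₀ := 0)
    (by
      filter_upwards [hne, self_mem_nhdsWithin] with ζ hζ hζ0
      exact (((hf _).comp ζ (differentiableAt_inv hζ0)).sub_const w).inv hζ)
    ⟨ε⁻¹, eventually_map.mpr <| h'.mono fun ζ hζ => by
      simpa only [norm_inv] using inv_anti₀ hε hζ⟩
    (hne.mono fun ζ hζ => inv_ne_zero hζ)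
  refine ⟨m, IsBigO.of_bound c⁻¹ ?_⟩
  filter_upwards [tendsto_inv₀_cobounded'.eventually hlow, h, eventually_ne_cobounded 0]
    with z hz hzw hz0
  simp only [sub_zero, inv_inv, norm_inv, inv_pow] at hz
  have hz0' : 0 < ‖z‖ := norm_pos_iff.mpr hz0
  rw [le_inv_comm₀ (by positivity) (hε.trans_le hzw)] at hz
  simpa [div_eq_inv_mul, mul_comm] using hz

theorem IsOpenMap.exists_eventually_le_dist_of_isBounded_preimage {E Y : Type*}
    [SeminormedAddCommGroup E] [MetricSpace Y] [BaireSpace Y] [Nonempty Y] {f : E → Y}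
    (hf : IsOpenMap f) (hfib : ∀ w, IsBounded (f ⁻¹' {w})) :
    ∃ w, ∃ ε > 0, ∀ᶠ z in cobounded E, ε ≤ dist (f z) w := by
  by_contra! hfreq
  have hdense : ∀ n : ℕ, Dense (f '' {z | n < ‖z‖}) := by
    refine fun n => Metric.dense_iff.mpr fun w ε hε => ?_
    obtain ⟨z, hzw, hzn⟩ := ((hfreq w ε hε).and_eventually
      (tendsto_norm_cobounded_atTop.eventually_gt_atTop (n : ℝ))).exists
    exact ⟨f z, Metric.mem_ball.mpr hzw, z, hzn, rfl⟩
  obtain ⟨w, hw⟩ := (dense_iInter_of_isOpen_nat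
    (fun n => hf _ (isOpen_lt continuous_const continuous_norm)) hdense).nonempty
  obtain ⟨C, hC⟩ := isBounded_iff_forall_norm_le.mp (hfib w)
  obtain ⟨n, hn⟩ := exists_nat_gt C
  obtain ⟨z, hzn, hzw⟩ := mem_iInter.mp hw n
  exact (hC z hzw).not_gt (hn.trans hzn)

theorem Polynomial.exists_nodup_roots_sub_C {R : Type*} [CommRing R] [IsDomain R] [CharZero R]
    (q : R[X]) : ∃ w, (q - C w).roots.Nodup := by
  by_cases hq : derivative q = 0
  · refine ⟨0, ?_⟩
    rw [eq_C_of_derivative_eq_zero hq, ← C_sub, roots_C]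
    exact Multiset.nodup_zero
  classical
  -- a multiple root of `q - C w` is a critical point of `q` with critical value `w`
  obtain ⟨w, hw⟩ := Infinite.exists_notMem_finset ((q.derivative.roots.map q.eval).toFinset)
  refine ⟨w, Multiset.nodup_iff_count_le_one.mpr fun a => ?_⟩
  by_contra! hmult
  rw [count_roots] at hmult
  have hne : q - C w ≠ 0 := by
    intro h
    simp [h] at hmult
  obtain ⟨hroot, hcrit⟩ := (one_lt_rootMultiplicity_iff_isRoot hne).mp hmult
  rw [derivative_sub, derivative_C, sub_zero] at hcrit
  refine hw (Multiset.mem_toFinset.mpr (Multiset.mem_map.mpr ⟨a, (mem_roots hq).mpr hcrit, ?_⟩))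
  simpa [sub_eq_zero] using hroot

theorem Polynomial.natDegree_le_of_forall_fiber_card_le {K : Type*} [Field K] [IsAlgClosed K]
    [CharZero K] {q : K[X]} {k : ℕ}
    (hfib : ∀ w, ∃ s : Finset K, s.card ≤ k ∧ {x | q.eval x = w} ⊆ ↑s) : q.natDegree ≤ k := by
  classical
  obtain ⟨w, hw⟩ := q.exists_nodup_roots_sub_C
  obtain ⟨s, hsk, hs⟩ := hfib w
  have hsub : (q - C w).roots.toFinset ⊆ s := fun x hx => hs <| by
    simpa [sub_eq_zero] using isRoot_of_mem_roots (Multiset.mem_toFinset.mp hx)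
  calc q.natDegree = (q - C w).roots.toFinset.card := by
        rw [Multiset.toFinset_card_of_nodup hw, IsAlgClosed.card_roots_eq_natDegree, natDegree_sub_C]
    _ ≤ s.card := Finset.card_le_card hsub
    _ ≤ k := hsk

theorem stmt11_general (p : ℂ → ℂ) (hp : Differentiable ℂ p) (k : ℕ)
    (hfib : ∀ w : ℂ, ∃ s : Finset ℂ, s.card ≤ k ∧ {ζ : ℂ | p ζ = w} ⊆ ↑s) :
    ∃ q : Polynomial ℂ, q.natDegree ≤ k ∧ ∀ z, p z = q.eval z := by
  have hfin : ∀ w, (p ⁻¹' {w}).Finite := fun w =>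
    let ⟨s, _, hs⟩ := hfib w
    s.finite_toSet.subset hs
  have hopen : IsOpenMap p := by
    refine (Complex.analyticOnNhd_univ_iff_differentiable.mpr hp).is_constant_or_isOpenMap
      |>.resolve_left ?_
    rintro ⟨c, hc⟩
    exact infinite_univ ((hfin c).subset fun z _ => hc z)
  obtain ⟨w, ε, hε, hfar⟩ :=
    hopen.exists_eventually_le_dist_of_isBounded_preimage fun w => (hfin w).isBounded
  obtain ⟨m, hm⟩ :=
    hp.exists_isBigO_pow_of_eventually_le_norm_sub hε (by simpa only [dist_eq_norm] using hfar)
  obtain ⟨q, -, hq⟩ := (hp.sub_const w).exists_polynomial_of_isBigO_pow hm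
  have hpq : ∀ z, p z = (q + C w).eval z := fun z => by simp [← hq]
  exact ⟨q + C w, natDegree_le_of_forall_fiber_card_le (by simpa only [← hpq] using hfib), hpq⟩

/-- An entire function all of whose fibers have at most `k` points is a
polynomial of degree at most `k`. -/
theorem stmt11 (p : ℂ → ℂ) (hp : Differentiable ℂ p) (k : ℕ) (hk : 1 ≤ k)
    (hfib : ∀ w : ℂ, ∃ s : Finset ℂ, s.card ≤ k ∧ {ζ : ℂ | p ζ = w} ⊆ ↑s) :
    ∃ q : Polynomial ℂ, q.natDegree ≤ k ∧ ∀ z, p z = q.eval z :=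
  stmt11_general p hp k hfib
end

section
/- Fix m ∈ ℕ. Let (pᵢ) be a sequence of polynomials of degree at most m with pᵢ(0) = 0 and max_{|ζ| ≤ 1} |pᵢ(ζ)| = 1, and let rᵢ denote the radius of the largest disk centered at 0 contained in the image pᵢ({|ζ| < 1}). Then inf_i rᵢ > 0; i.e., there is a constant c(m) > 0 so that every polynomial p of degree ≤ m with p(0)=0 and sup_{|ζ|≤1}|p| = 1 satisfies {|w| < c(m)} ⊆ p({|ζ| < 1}). -/
/-!
If `w` is not attained by `p` on the open unit disk, every root of `p - w` has modulus `≥ 1`,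
so on the closed disk each factor `|ζ - z|` of `|p(ζ) - w|` is at most `2|z|`, giving
`|p(ζ) - w| ≤ 2^m |p(0) - w| = 2^m |w|`. Then `1 = sup |p| ≤ (2^m + 1)|w|`, so
`c(m) = 1 / (2^m + 1)` works.
-/

open Polynomial Metric

theorem Polynomial.Splits.norm_eval_le_two_pow_mul_norm_eval_zero {K : Type*} [NormedField K]
    {q : K[X]} (hq : q.Splits) {ζ : K} (hζ : ∀ z ∈ q.roots, ‖ζ‖ ≤ ‖z‖) :
    ‖q.eval ζ‖ ≤ 2 ^ q.natDegree * ‖q.eval 0‖ := by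
  have norm_eval (x : K) :
      ‖q.eval x‖ = ‖q.leadingCoeff‖ * (q.roots.map fun z => ‖x - z‖).prod := by
    rw [hq.eval_eq_prod_roots, norm_mul, ← normHom_apply (_ : Multiset K).prod, map_multiset_prod,
      Multiset.map_map]
    rfl
  have hprod : (q.roots.map fun z => ‖ζ - z‖).prod ≤ (q.roots.map fun z => 2 * ‖0 - z‖).prod :=
    Multiset.prod_map_le_prod_map₀ _ _ (fun _ _ => norm_nonneg _) fun z hz => by
      rw [zero_sub, norm_neg]
      linarith [norm_sub_le ζ z, hζ z hz]
  rw [Multiset.prod_map_mul, Multiset.map_const', Multiset.prod_replicate,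
    ← hq.natDegree_eq_card_roots] at hprod
  calc ‖q.eval ζ‖
      ≤ ‖q.leadingCoeff‖ * (2 ^ q.natDegree * (q.roots.map fun z => ‖0 - z‖).prod) := by
        rw [norm_eval]; gcongr
    _ = 2 ^ q.natDegree * ‖q.eval 0‖ := by rw [norm_eval]; ring

theorem Polynomial.norm_eval_sub_le_of_notMem_image_ball {K : Type*} [NormedField K]
    [IsAlgClosed K] {p : K[X]} {r : ℝ} {w : K} (hw : w ∉ (fun ζ => p.eval ζ) '' ball 0 r)
    {ζ : K} (hζ : ζ ∈ closedBall 0 r) :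
    ‖p.eval ζ - w‖ ≤ 2 ^ p.natDegree * ‖p.eval 0 - w‖ := by
  have hroots : ∀ z ∈ (p - C w).roots, ‖ζ‖ ≤ ‖z‖ := fun z hz => by
    have hpz : p.eval z = w := by
      simpa [sub_eq_zero] using (isRoot_of_mem_roots hz).eq_zero
    have hz_out : z ∉ ball 0 r := fun hz_in => hw ⟨z, hz_in, hpz⟩
    rw [mem_ball_zero_iff, not_lt] at hz_out
    exact (mem_closedBall_zero_iff.mp hζ).trans hz_out
  simpa [natDegree_sub_C] using
    (IsAlgClosed.splits (p - C w)).norm_eval_le_two_pow_mul_norm_eval_zero hroots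

/-- The normal-family argument in Theorem 6.7: there is a constant `c(m) > 0`
such that every polynomial `p` of degree at most `m` with `p(0) = 0` and
`max_{|ζ|≤1} |p| = 1` satisfies `{|w| < c(m)} ⊆ p({|ζ| < 1})`. -/
theorem stmt13 (m : ℕ) :
    ∃ c : ℝ, 0 < c ∧ ∀ p : Polynomial ℂ, p.natDegree ≤ m → p.eval 0 = 0 →
      sSup ((fun ζ => ‖p.eval ζ‖) '' Metric.closedBall 0 1) = 1 →
      Metric.ball (0:ℂ) c ⊆ (fun ζ => p.eval ζ) '' Metric.ball 0 1 := by
  refine ⟨(2 ^ m + 1)⁻¹, by positivity, fun p hdeg h0 hsup w hw => ?_⟩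
  by_contra hw_not
  have hbound : ∀ y ∈ (fun ζ => ‖p.eval ζ‖) '' closedBall 0 1, y ≤ (2 ^ m + 1) * ‖w‖ := by
    rintro _ ⟨ζ, hζ, rfl⟩
    have hζw := norm_eval_sub_le_of_notMem_image_ball hw_not hζ
    rw [h0, zero_sub, norm_neg] at hζw
    calc ‖p.eval ζ‖ ≤ ‖p.eval ζ - w‖ + ‖w‖ := norm_le_norm_sub_add _ _
      _ ≤ 2 ^ m * ‖w‖ + ‖w‖ := by
        gcongr
        exact hζw.trans (by gcongr; exact one_le_two)
      _ = (2 ^ m + 1) * ‖w‖ := by ring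
  have h_one_le : 1 ≤ (2 ^ m + 1) * ‖w‖ :=
    hsup.symm.trans_le (csSup_le ((nonempty_closedBall.mpr zero_le_one).image _) hbound)
  rw [mem_ball_zero_iff, ← one_div, lt_div_iff₀ (by positivity)] at hw
  linarith
end

section
/- Let g : ℂ → ℂ be holomorphic near a fixed point x with g(x) = x and multiplier λ = g'(x) satisfying |λ| > 1 (repelling fixed point), and suppose g extends to an entire function (e.g. a polynomial). Then there exists an entire function φ : ℂ → ℂ with φ(0) = x, φ'(0) = 1, and g(φ(ζ)) = φ(λζ) for all ζ ∈ ℂ; moreover φ is given by the locally uniform limit φ(ζ) = lim_{j→∞} g^j(x + λ^{-j}ζ). -/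
/-!
Write `F j ζ = g^[j] (x + μ ^ (-j) * ζ)` with `μ = g'(x)`, so that `F (j + 1) ζ = g (F j (ζ / μ))`.
Near `x` we have `g (x + w) = x + μ w + O(|w|²)`, and `g` is `M`-Lipschitz for some `M < |μ|²`.
The maps with `|φ ζ - x - ζ| ≤ K |ζ|²` on a small disc then form a class preserved by
`φ ↦ g ∘ φ ∘ μ⁻¹`, and on it `|F (j + 1) - F j| (ζ) ≤ M |F j - F (j - 1)| (ζ / μ)`, which decays
like `(M / |μ|²) ^ j`. So `F j` converges uniformly on that disc, and the identity
`F (j + m) ζ = g^[m] (F j (μ ^ (-m) * ζ))`, with `g^[m]` Lipschitz on a compact ball, carries the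
convergence to every disc of radius `ρ |μ| ^ m`. The limit keeps the quadratic estimate (hence
`φ 0 = x`, `φ' 0 = 1`), is entire as a locally uniform limit of entire maps, and the functional
equation is the limit of `g ∘ F j = F (j + 1) ∘ (μ * ·)`.
-/

open Filter Metric Set Topology NNReal Asymptotics

section UniformLimits

variable {α β E : Type*}

theorem tendstoUniformlyOn_add_atTop_iff [UniformSpace β] {F : ℕ → α → β} {f : α → β}
    {s : Set α} (m : ℕ) :
    TendstoUniformlyOn (fun n => F (n + m)) f atTop s ↔ TendstoUniformlyOn F f atTop s := by
  conv_rhs => rw [← map_add_atTop_eq_nat m]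
  simp only [TendstoUniformlyOn, eventually_map]

theorem exists_tendstoUniformlyOn_of_norm_sub_le [NormedAddCommGroup E] [CompleteSpace E]
    {F : ℕ → α → E} {s : Set α} {u : ℕ → ℝ} (hu : Summable u)
    (h : ∀ n, ∀ z ∈ s, ‖F (n + 1) z - F n z‖ ≤ u n) :
    ∃ f, TendstoUniformlyOn F f atTop s := by
  refine ⟨fun z => F 0 z + ∑' n, (F (n + 1) z - F n z), ?_⟩
  have hsum := tendstoUniformlyOn_tsum_nat hu fun n z hz => h n z hz
  rw [Metric.tendstoUniformlyOn_iff] at hsum ⊢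
  intro ε hε
  filter_upwards [hsum ε hε] with N hN z hz
  rw [← add_sub_cancel (F 0 z) (F N z), ← Finset.sum_range_sub (fun n => F n z), dist_add_left]
  exact hN z hz

theorem tendstoLocallyUniformly_limUnder [TopologicalSpace α] [LocallyCompactSpace α]
    [UniformSpace β] [T2Space β] [Nonempty β] {F : ℕ → α → β} {s : ℕ → Set α}
    (hs : ∀ K, IsCompact K → ∃ m, K ⊆ s m) (h : ∀ m, ∃ f, TendstoUniformlyOn F f atTop (s m)) :
    TendstoLocallyUniformly F (fun z => limUnder atTop (F · z)) atTop := by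
  rw [tendstoLocallyUniformly_iff_forall_isCompact]
  intro K hK
  obtain ⟨m, hKm⟩ := hs K hK
  obtain ⟨f, hf⟩ := h m
  exact (hf.congr_right fun z hz => (hf.tendsto_at hz).limUnder_eq.symm).mono hKm

end UniformLimits

theorem AnalyticAt.isBigO_sub_sub_smul_deriv {𝕜 E : Type*} [NontriviallyNormedField 𝕜]
    [NormedAddCommGroup E] [NormedSpace 𝕜 E] {f : 𝕜 → E} {x : 𝕜} (hf : AnalyticAt 𝕜 f x) :
    (fun w => f (x + w) - f x - w • deriv f x) =O[𝓝 0] fun w => ‖w‖ ^ 2 := by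
  obtain ⟨p, hp⟩ := hf
  convert hp.isBigO_sub_partialSum_pow 2 using 2 with w
  simp [FormalMultilinearSeries.partialSum, Finset.sum_range_succ, hp.deriv, sub_sub]
  exact (hp.coeff_zero _).symm

noncomputable def koenigsApprox (g : ℂ → ℂ) (x μ : ℂ) (j : ℕ) (ζ : ℂ) : ℂ :=
  g^[j] (x + μ ^ (-(j : ℤ)) * ζ)

section koenigsApprox

variable {g : ℂ → ℂ} {x μ : ℂ}

theorem koenigsApprox_zero (ζ : ℂ) : koenigsApprox g x μ 0 ζ = x + ζ := by
  simp [koenigsApprox]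

theorem koenigsApprox_add (j m : ℕ) (ζ : ℂ) :
    koenigsApprox g x μ (j + m) ζ = g^[m] (koenigsApprox g x μ j (μ ^ (-(m : ℤ)) * ζ)) := by
  simp only [koenigsApprox, ← Function.iterate_add_apply, add_comm m j, ← mul_assoc, zpow_neg,
    zpow_natCast, pow_add, mul_inv]

theorem koenigsApprox_succ (j : ℕ) (ζ : ℂ) :
    koenigsApprox g x μ (j + 1) ζ = g (koenigsApprox g x μ j (μ⁻¹ * ζ)) := by
  simpa using koenigsApprox_add (g := g) (x := x) (μ := μ) j 1 ζ

theorem apply_koenigsApprox (hμ : μ ≠ 0) (j : ℕ) (ζ : ℂ) :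
    g (koenigsApprox g x μ j ζ) = koenigsApprox g x μ (j + 1) (μ * ζ) := by
  rw [koenigsApprox_succ, inv_mul_cancel_left₀ hμ]

theorem differentiable_koenigsApprox (hg : Differentiable ℂ g) (j : ℕ) :
    Differentiable ℂ (koenigsApprox g x μ j) :=
  (hg.iterate j).comp ((differentiable_id.const_mul _).const_add x)

end koenigsApprox

def IsQuadraticallyClose (x : ℂ) (K ρ : ℝ) (φ : ℂ → ℂ) : Prop :=
  ∀ ζ : ℂ, ‖ζ‖ ≤ ρ → ‖φ ζ - x - ζ‖ ≤ K * ‖ζ‖ ^ 2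

namespace IsQuadraticallyClose

variable {x : ℂ} {K ρ : ℝ} {φ : ℂ → ℂ}

theorem apply_zero (h : IsQuadraticallyClose x K ρ φ) (hρ : 0 ≤ ρ) : φ 0 = x := by
  simpa [sub_eq_zero] using h 0 (by simpa using hρ)

theorem hasDerivAt (h : IsQuadraticallyClose x K ρ φ) (hρ : 0 < ρ) : HasDerivAt φ 1 0 := by
  have hO : (fun ζ => φ ζ - x - ζ) =O[𝓝 0] fun ζ : ℂ => ζ ^ 2 :=
    IsBigO.of_bound K <| by
      filter_upwards [closedBall_mem_nhds (0 : ℂ) hρ] with ζ hζ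
      simpa using h ζ (by simpa using hζ)
  rw [hasDerivAt_iff_isLittleO, h.apply_zero hρ.le]
  simpa using hO.trans_isLittleO (isLittleO_pow_id one_lt_two)

theorem norm_sub_le (h : IsQuadraticallyClose x K ρ φ) (hKρ : K * ρ ≤ 1) {ζ : ℂ}
    (hζ : ‖ζ‖ ≤ ρ) : ‖φ ζ - x‖ ≤ 2 * ‖ζ‖ := by
  have hK : K * ‖ζ‖ ^ 2 ≤ ‖ζ‖ := by
    rcases le_total 0 K with hK | hK
    · nlinarith [norm_nonneg ζ, mul_le_mul_of_nonneg_left hζ hK]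
    · nlinarith [norm_nonneg ζ]
  calc ‖φ ζ - x‖ ≤ ‖φ ζ - x - ζ‖ + ‖ζ‖ := norm_le_norm_sub_add _ _
    _ ≤ 2 * ‖ζ‖ := by linarith [h ζ hζ]

theorem of_tendsto {F : ℕ → ℂ → ℂ} (hF : ∀ n, IsQuadraticallyClose x K ρ (F n))
    (hlim : ∀ ζ, Tendsto (F · ζ) atTop (𝓝 (φ ζ))) : IsQuadraticallyClose x K ρ φ :=
  fun ζ hζ => le_of_tendsto' (((hlim ζ).sub_const x).sub_const ζ).norm fun n => hF n ζ hζ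

end IsQuadraticallyClose

/-- The constraints `four_mul_C_le` and `K_mul_ρ_le` are what make `IsQuadraticallyClose x K ρ`
invariant under `φ ↦ g ∘ φ ∘ μ⁻¹`; `M_lt` makes that map contract consecutive differences. -/
structure RepellingBounds (g : ℂ → ℂ) (x μ : ℂ) (C K ρ : ℝ) (M : ℝ≥0) : Prop where
  one_lt_norm : 1 < ‖μ‖
  C_nonneg : 0 ≤ C
  ρ_pos : 0 < ρ
  four_mul_C_le : 4 * C ≤ K * (‖μ‖ * (‖μ‖ - 1))
  K_mul_ρ_le : K * ρ ≤ 1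
  M_lt : (M : ℝ) < ‖μ‖ ^ 2
  quadratic : ∀ w : ℂ, ‖w‖ ≤ 2 * ρ → ‖g (x + w) - x - μ * w‖ ≤ C * ‖w‖ ^ 2
  lipschitzOnWith : LipschitzOnWith M g (closedBall x (2 * ρ))

namespace RepellingBounds

variable {g : ℂ → ℂ} {x μ : ℂ} {C K ρ : ℝ} {M : ℝ≥0}

theorem ne_zero (hb : RepellingBounds g x μ C K ρ M) : μ ≠ 0 :=
  norm_pos_iff.1 (one_pos.trans hb.one_lt_norm)

theorem K_nonneg (hb : RepellingBounds g x μ C K ρ M) : 0 ≤ K := by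
  have h := hb.one_lt_norm
  have h4C : 0 ≤ 4 * C := by linarith [hb.C_nonneg]
  exact nonneg_of_mul_nonneg_left (h4C.trans hb.four_mul_C_le) (by nlinarith)

theorem isQuadraticallyClose_comp (hb : RepellingBounds g x μ C K ρ M) {φ : ℂ → ℂ}
    (hφ : IsQuadraticallyClose x K ρ φ) :
    IsQuadraticallyClose x K ρ fun ζ => g (φ (μ⁻¹ * ζ)) := by
  intro ζ hζ
  have hL := hb.one_lt_norm
  set ω := μ⁻¹ * ζ
  have hω : ‖ω‖ = ‖ζ‖ / ‖μ‖ := by simp [ω, div_eq_inv_mul]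
  have hωρ : ‖ω‖ ≤ ρ := hω ▸ (div_le_self (norm_nonneg ζ) hL.le).trans hζ
  set w := φ ω - x
  have hw : ‖w‖ ≤ 2 * ‖ω‖ := hφ.norm_sub_le hb.K_mul_ρ_le hωρ
  have hwω : ‖w - ω‖ ≤ K * ‖ω‖ ^ 2 := hφ ω hωρ
  have hsplit : g (φ ω) - x - ζ = (g (x + w) - x - μ * w) + μ * (w - ω) := by
    simp only [w, ω, add_sub_cancel, mul_sub, mul_inv_cancel_left₀ hb.ne_zero]
    ring
  calc ‖g (φ ω) - x - ζ‖ ≤ C * ‖w‖ ^ 2 + ‖μ‖ * (K * ‖ω‖ ^ 2) := by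
        rw [hsplit]
        refine (norm_add_le _ _).trans (add_le_add (hb.quadratic w (by linarith)) ?_)
        rw [norm_mul]
        exact mul_le_mul_of_nonneg_left hwω (norm_nonneg μ)
    _ ≤ C * (2 * ‖ω‖) ^ 2 + ‖μ‖ * (K * ‖ω‖ ^ 2) := by
        gcongr
        exact hb.C_nonneg
    _ = (4 * C + K * ‖μ‖) * ‖ζ‖ ^ 2 / ‖μ‖ ^ 2 := by
        rw [hω]
        field_simp
        ring
    _ ≤ K * ‖ζ‖ ^ 2 := by
        rw [div_le_iff₀ (by positivity)]
        nlinarith [mul_le_mul_of_nonneg_right hb.four_mul_C_le (sq_nonneg ‖ζ‖)]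

theorem isQuadraticallyClose_koenigsApprox (hb : RepellingBounds g x μ C K ρ M) (j : ℕ) :
    IsQuadraticallyClose x K ρ (koenigsApprox g x μ j) := by
  induction j with
  | zero =>
    intro ζ _
    simpa [koenigsApprox_zero] using mul_nonneg hb.K_nonneg (sq_nonneg ‖ζ‖)
  | succ j ih =>
    intro ζ hζ
    rw [koenigsApprox_succ]
    exact hb.isQuadraticallyClose_comp ih ζ hζ

theorem koenigsApprox_mem_closedBall (hb : RepellingBounds g x μ C K ρ M) (j : ℕ) {ζ : ℂ}
    (hζ : ‖ζ‖ ≤ ρ) : koenigsApprox g x μ j ζ ∈ closedBall x (2 * ρ) := by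
  rw [mem_closedBall, dist_eq_norm]
  linarith [(hb.isQuadraticallyClose_koenigsApprox j).norm_sub_le hb.K_mul_ρ_le hζ]

theorem norm_koenigsApprox_succ_sub_le (hb : RepellingBounds g x μ C K ρ M) (j : ℕ) {ζ : ℂ}
    (hζ : ‖ζ‖ ≤ ρ) :
    ‖koenigsApprox g x μ (j + 1) ζ - koenigsApprox g x μ j ζ‖ ≤
      2 * K * ‖ζ‖ ^ 2 * (M / ‖μ‖ ^ 2) ^ j := by
  induction j generalizing ζ with
  | zero =>
    have h1 := hb.isQuadraticallyClose_koenigsApprox 1 ζ hζ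
    have h0 := hb.isQuadraticallyClose_koenigsApprox 0 ζ hζ
    calc _ = ‖(koenigsApprox g x μ 1 ζ - x - ζ) - (koenigsApprox g x μ 0 ζ - x - ζ)‖ := by
          congr 1; ring
      _ ≤ _ := (norm_sub_le _ _).trans (by simp only [pow_zero]; linarith)
  | succ j ih =>
    have hL := hb.one_lt_norm
    set ω := μ⁻¹ * ζ
    have hω : ‖ω‖ = ‖ζ‖ / ‖μ‖ := by simp [ω, div_eq_inv_mul]
    have hωρ : ‖ω‖ ≤ ρ := hω ▸ (div_le_self (norm_nonneg ζ) hL.le).trans hζ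
    have hμ : ‖μ‖ ≠ 0 := by positivity
    rw [koenigsApprox_succ (j + 1) ζ, koenigsApprox_succ j ζ]
    calc ‖g (koenigsApprox g x μ (j + 1) ω) - g (koenigsApprox g x μ j ω)‖
        ≤ M * ‖koenigsApprox g x μ (j + 1) ω - koenigsApprox g x μ j ω‖ :=
          hb.lipschitzOnWith.norm_sub_le (hb.koenigsApprox_mem_closedBall _ hωρ)
            (hb.koenigsApprox_mem_closedBall _ hωρ)
      _ ≤ M * (2 * K * ‖ω‖ ^ 2 * (M / ‖μ‖ ^ 2) ^ j) := by gcongr; exact ih hωρ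
      _ = 2 * K * ‖ζ‖ ^ 2 * (M / ‖μ‖ ^ 2) ^ (j + 1) := by
          rw [hω, pow_succ _ j]
          field_simp

theorem exists_tendstoUniformlyOn (hb : RepellingBounds g x μ C K ρ M) (hg : Differentiable ℂ g)
    (m : ℕ) :
    ∃ f, TendstoUniformlyOn (koenigsApprox g x μ) f atTop (closedBall 0 (ρ * ‖μ‖ ^ m)) := by
  obtain ⟨A, hA⟩ := (hg.iterate m).contDiff.locallyLipschitz.locallyLipschitzOn
    |>.exists_lipschitzOnWith_of_compact (isCompact_closedBall x (2 * ρ))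
  have hμ : 0 < ‖μ‖ := one_pos.trans hb.one_lt_norm
  have hq : M / ‖μ‖ ^ 2 < 1 := (div_lt_one (by positivity)).2 hb.M_lt
  rw [← exists_congr fun f => tendstoUniformlyOn_add_atTop_iff m]
  refine exists_tendstoUniformlyOn_of_norm_sub_le
    ((summable_geometric_of_lt_one (by positivity) hq).mul_left (A * (2 * K * ρ ^ 2)))
    fun n ζ hζ => ?_
  set ω := μ ^ (-(m : ℤ)) * ζ
  have hω : ‖ω‖ ≤ ρ := by
    rw [mem_closedBall, dist_zero_right] at hζ
    rw [norm_mul, norm_zpow, zpow_neg, zpow_natCast, inv_mul_le_iff₀ (by positivity)]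
    linarith
  rw [koenigsApprox_add (n + 1) m ζ, koenigsApprox_add n m ζ]
  calc _ ≤ A * ‖koenigsApprox g x μ (n + 1) ω - koenigsApprox g x μ n ω‖ :=
        hA.norm_sub_le (hb.koenigsApprox_mem_closedBall _ hω)
          (hb.koenigsApprox_mem_closedBall _ hω)
    _ ≤ A * (2 * K * ρ ^ 2 * (M / ‖μ‖ ^ 2) ^ n) := by
        gcongr
        refine (hb.norm_koenigsApprox_succ_sub_le n hω).trans ?_
        have := hb.K_nonneg
        gcongr
    _ = A * (2 * K * ρ ^ 2) * (M / ‖μ‖ ^ 2) ^ n := by ring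

theorem tendstoLocallyUniformly (hb : RepellingBounds g x μ C K ρ M) (hg : Differentiable ℂ g) :
    TendstoLocallyUniformly (koenigsApprox g x μ)
      (fun ζ => limUnder atTop (koenigsApprox g x μ · ζ)) atTop := by
  refine tendstoLocallyUniformly_limUnder (fun S hS => ?_) (hb.exists_tendstoUniformlyOn hg)
  obtain ⟨R, hR⟩ := hS.isBounded.subset_closedBall 0
  obtain ⟨m, hm⟩ := ((tendsto_pow_atTop_atTop_of_one_lt hb.one_lt_norm).eventually_ge_atTop
    (R / ρ)).exists
  exact ⟨m, hR.trans (closedBall_subset_closedBall ((div_le_iff₀' hb.ρ_pos).1 hm))⟩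

end RepellingBounds

theorem exists_repellingBounds {g : ℂ → ℂ} {x : ℂ} (hg : Differentiable ℂ g) (hfix : g x = x)
    (hrep : 1 < ‖deriv g x‖) : ∃ C K ρ : ℝ, ∃ M : ℝ≥0, RepellingBounds g x (deriv g x) C K ρ M := by
  set L := ‖deriv g x‖
  have hL : 0 < L * (L - 1) := by nlinarith
  obtain ⟨C, hC, hCO⟩ := (hg.analyticAt x).isBigO_sub_sub_smul_deriv.exists_pos
  obtain ⟨ε, hε, hquad⟩ := Metric.eventually_nhds_iff.1 hCO.bound
  obtain ⟨M, hLM, hML⟩ := exists_between (show L < L ^ 2 by nlinarith)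
  have hM : 0 ≤ M := by linarith
  obtain ⟨t, ht, hlip⟩ := hg.contDiff.contDiffAt.exists_lipschitzOnWith_of_nnnorm_lt M.toNNReal
    (by rwa [← NNReal.coe_lt_coe, coe_nnnorm, ← norm_deriv_eq_norm_fderiv, Real.coe_toNNReal _ hM])
  obtain ⟨δ, hδ, hδt⟩ := Metric.mem_nhds_iff.1 ht
  set K := 4 * C / (L * (L - 1))
  have hK : 0 ≤ K := by positivity
  set ρ := min (min ε δ / 4) (K + 1)⁻¹
  have hρ : 0 < ρ := by positivity
  have h2ρ : 2 * ρ < min ε δ := by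
    have := min_le_left (min ε δ / 4) (K + 1)⁻¹
    linarith [lt_min hε hδ]
  refine ⟨C, K, ρ, M.toNNReal, ⟨hrep, hC.le, hρ, (div_mul_cancel₀ _ hL.ne').ge, ?_, ?_, ?_, ?_⟩⟩
  · calc K * ρ ≤ K * (K + 1)⁻¹ := by gcongr; exact min_le_right _ _
      _ ≤ 1 := by rw [← div_eq_mul_inv, div_le_one (by positivity)]; linarith
  · rwa [Real.coe_toNNReal _ hM]
  · intro w hw
    have := hquad (show dist w 0 < ε by rw [dist_zero_right]; linarith [min_le_left ε δ])
    simpa [hfix, mul_comm w] using this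
  · exact hlip.mono ((closedBall_subset_ball (by linarith [min_le_right ε δ])).trans hδt)

/-- Koenigs linearization at a repelling fixed point, globalized: if `g` is
entire, `g(x) = x`, and `|g'(x)| > 1`, then there is an entire `φ` with
`φ(0) = x`, `φ'(0) = 1`, `g ∘ φ(ζ) = φ(λ ζ)` where `λ = g'(x)`, and `φ` is the
locally uniform limit of `ζ ↦ g^j(x + λ^{-j} ζ)`. -/
theorem stmt14 (g : ℂ → ℂ) (hg : Differentiable ℂ g) (x : ℂ) (hfix : g x = x)
    (hrep : 1 < ‖deriv g x‖) :
    ∃ φ : ℂ → ℂ, Differentiable ℂ φ ∧ φ 0 = x ∧ HasDerivAt φ 1 0 ∧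
      (∀ ζ : ℂ, g (φ ζ) = φ (deriv g x * ζ)) ∧
      TendstoLocallyUniformly
        (fun (j : ℕ) (ζ : ℂ) => g^[j] (x + (deriv g x) ^ (-(j : ℤ)) * ζ))
        φ atTop := by
  obtain ⟨C, K, ρ, M, hb⟩ := exists_repellingBounds hg hfix hrep
  set F := koenigsApprox g x (deriv g x)
  set φ := fun ζ => limUnder atTop (F · ζ)
  have hlim : TendstoLocallyUniformlyOn F φ atTop univ :=
    tendstoLocallyUniformlyOn_univ.2 (hb.tendstoLocallyUniformly hg)
  have hpt (ζ : ℂ) : Tendsto (F · ζ) atTop (𝓝 (φ ζ)) := hlim.tendsto_at (mem_univ ζ)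
  have hφ : IsQuadraticallyClose x K ρ φ := .of_tendsto hb.isQuadraticallyClose_koenigsApprox hpt
  refine ⟨φ, ?_, hφ.apply_zero hb.ρ_pos.le, hφ.hasDerivAt hb.ρ_pos, fun ζ => ?_,
    tendstoLocallyUniformlyOn_univ.1 hlim⟩
  · exact differentiableOn_univ.1 <| hlim.differentiableOn
      (.of_forall fun j => (differentiable_koenigsApprox hg j).differentiableOn) isOpen_univ
  · have hshift : Tendsto (fun j => g (F j ζ)) atTop (𝓝 (φ (deriv g x * ζ))) := by
      simp_rw [F, apply_koenigsApprox hb.ne_zero]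
      exact (tendsto_add_atTop_iff_nat 1).2 (hpt _)
    exact tendsto_nhds_unique ((hg.continuous.tendsto _).comp (hpt ζ)) hshift
end

section
/- Let Ψ be a family of holomorphic maps ψ : {|ζ| < 1} → ℂ² that is compact in the topology of locally uniform convergence, and suppose every ψ ∈ Ψ is nonconstant. Then there exist ε > 0 and 0 < r < 1 such that for each ψ ∈ Ψ there is ρ ≤ r with |ψ(ζ) − ψ(0)| ≥ ε for all |ζ| = ρ. -/
/-!
Near the origin a nonconstant holomorphic map takes the value `ψ(0)` only at `0`, so `ψ − ψ(0)`
has no zero on some small circle `|ζ| = ρ`, hence is bounded below there by compactness of the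
circle. By joint continuity half of that bound persists for all members of the family near
`ψ`, and compactness of the family makes finitely many such neighbourhoods enough.
-/

open Filter Metric Set Topology

theorem eventually_sphere_of_eventually_nhdsNE {X : Type*} [PseudoMetricSpace X] {p : X → Prop}
    {x₀ : X} (h : ∀ᶠ x in 𝓝[≠] x₀, p x) :
    ∀ᶠ ρ in 𝓝[>] (0 : ℝ), ∀ x ∈ sphere x₀ ρ, p x := by
  obtain ⟨δ, hδ, hball⟩ := Metric.mem_nhdsWithin_iff.1 h
  filter_upwards [self_mem_nhdsWithin, (eventually_lt_nhds hδ).filter_mono nhdsWithin_le_nhds]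
    with ρ (hρ : 0 < ρ) hρδ x (hx : dist x x₀ = ρ)
  refine hball ⟨?_, ?_⟩
  · rwa [mem_ball, hx]
  · rintro rfl
    simp only [dist_self] at hx
    exact hρ.ne hx

theorem eventually_sphere_ne_of_differentiableOn {E : Type*} [NormedAddCommGroup E]
    [NormedSpace ℂ E] [CompleteSpace E] {g : ℂ → E} {U : Set ℂ} {z₀ : ℂ} (hU : IsOpen U)
    (hUc : IsPreconnected U) (hg : DifferentiableOn ℂ g U) (hz₀ : z₀ ∈ U)
    (hnc : ∃ z ∈ U, g z ≠ g z₀) :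
    ∀ᶠ ρ in 𝓝[>] (0 : ℝ), ∀ z ∈ sphere z₀ ρ, g z ≠ g z₀ := by
  have ha : AnalyticOnNhd ℂ g U := hg.analyticOnNhd hU
  refine eventually_sphere_of_eventually_nhdsNE <|
    ((ha z₀ hz₀).eventually_eq_or_eventually_ne analyticAt_const).resolve_left fun hloc => ?_
  obtain ⟨z, hz, hne⟩ := hnc
  exact hne (ha.eqOn_of_preconnected_of_eventuallyEq analyticOnNhd_const hUc hz₀ hloc hz)

theorem IsCompact.exists_pos_eventually_forall_le {X Y : Type*} [TopologicalSpace X]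
    [TopologicalSpace Y] {G : X × Y → ℝ} {S : Set Y} {x₀ : X} (hS : IsCompact S)
    (hG : ∀ y ∈ S, ContinuousAt G (x₀, y)) (hpos : ∀ y ∈ S, 0 < G (x₀, y)) :
    ∃ c > 0, ∀ᶠ x in 𝓝 x₀, ∀ y ∈ S, c ≤ G (x, y) := by
  rcases S.eq_empty_or_nonempty with rfl | hne
  · exact ⟨1, one_pos, by simp⟩
  have hslice : ContinuousOn (fun y => G (x₀, y)) S := fun y hy =>
    ((hG y hy).comp_of_eq (continuous_const.prodMk continuous_id).continuousAt
      rfl).continuousWithinAt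
  obtain ⟨y₀, hy₀, hmin⟩ := hS.exists_isMinOn hne hslice
  refine ⟨G (x₀, y₀) / 2, half_pos (hpos y₀ hy₀),
    hS.eventually_forall_of_forall_eventually fun y hy => ?_⟩
  have hlt : G (x₀, y₀) / 2 < G (x₀, y) := (half_lt_self (hpos y₀ hy₀)).trans_le (hmin hy)
  exact (hG y hy).eventually (eventually_ge_nhds hlt)

theorem eventually_forall_of_forall_eventually_prod_nhds {X K : Type*} [TopologicalSpace K]
    [CompactSpace K] {l : Filter X} {P : X × K → Prop}
    (h : ∀ i, ∀ᶠ p in l ×ˢ 𝓝 i, P p) : ∀ᶠ x in l, ∀ i, P (x, i) := by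
  have := isCompact_univ.mem_prod_nhdsSet_of_forall fun i _ => h i
  rw [nhdsSet_univ] at this
  exact mem_prod_top.1 this

/-- Lemma 2.8: for a compact family (in the topology of locally uniform
convergence) of nonconstant holomorphic maps `ψ : {|ζ| < 1} → ℂ²`, there are
uniform `ε > 0` and `0 < r < 1` such that each member satisfies
`|ψ(ζ) − ψ(0)| ≥ ε` on some circle `|ζ| = ρ` with `ρ ≤ r`. -/
theorem stmt17 {K : Type*} [TopologicalSpace K] [CompactSpace K]
    (F : K → ℂ → ℂ × ℂ)
    (hcont : ContinuousOn (fun p : K × ℂ => F p.1 p.2)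
      (Set.univ ×ˢ Metric.ball 0 1))
    (hdiff : ∀ i, DifferentiableOn ℂ (F i) (Metric.ball 0 1))
    (hnc : ∀ i, ∃ ζ ∈ Metric.ball (0:ℂ) 1, F i ζ ≠ F i 0) :
    ∃ ε : ℝ, 0 < ε ∧ ∃ r : ℝ, 0 < r ∧ r < 1 ∧
      ∀ i, ∃ ρ : ℝ, 0 < ρ ∧ ρ ≤ r ∧
        ∀ ζ : ℂ, ‖ζ‖ = ρ → ε ≤ ‖F i ζ - F i 0‖ := by
  have hF : ∀ i, ∀ ζ ∈ ball (0 : ℂ) 1, ContinuousAt (fun p : K × ℂ => F p.1 p.2) (i, ζ) :=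
    fun i ζ hζ => hcont.continuousAt ((isOpen_univ.prod isOpen_ball).mem_nhds ⟨trivial, hζ⟩)
  have hG : ∀ i, ∀ ζ ∈ ball (0 : ℂ) 1,
      ContinuousAt (fun p : K × ℂ => ‖F p.1 p.2 - F p.1 0‖) (i, ζ) := fun i ζ hζ =>
    ((hF i ζ hζ).sub ((hF i 0 (mem_ball_self one_pos)).comp_of_eq
      (continuous_fst.prodMk continuous_const).continuousAt rfl)).norm
  have hlocal : ∀ i, ∀ᶠ p in 𝓝[>] (0 : ℝ) ×ˢ 𝓝 i, ∃ ρ : ℝ, 0 < ρ ∧ ρ ≤ 1 / 2 ∧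
      ∀ ζ : ℂ, ‖ζ‖ = ρ → p.1 ≤ ‖F p.2 ζ - F p.2 0‖ := by
    intro i
    have hsmall : ∀ᶠ ρ in 𝓝[>] (0 : ℝ), ρ ≤ 1 / 2 :=
      (eventually_le_nhds one_half_pos).filter_mono nhdsWithin_le_nhds
    obtain ⟨ρ, hne, hρ, hρr⟩ := ((eventually_sphere_ne_of_differentiableOn isOpen_ball
      (convex_ball 0 1).isPreconnected (hdiff i) (mem_ball_self one_pos) (hnc i)).and
      (eventually_mem_nhdsWithin.and hsmall)).exists
    have hsub : sphere (0 : ℂ) ρ ⊆ ball 0 1 := sphere_subset_ball (by linarith)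
    obtain ⟨c, hc, hnear⟩ := (isCompact_sphere (0 : ℂ) ρ).exists_pos_eventually_forall_le
      (fun ζ hζ => hG i ζ (hsub hζ)) fun ζ hζ => norm_pos_iff.2 (sub_ne_zero.2 (hne ζ hζ))
    filter_upwards [((eventually_le_nhds hc).filter_mono nhdsWithin_le_nhds).prod_mk hnear]
      with ⟨ε, j⟩ ⟨hεc, hj⟩
    exact ⟨ρ, hρ, hρr, fun ζ hζ => hεc.trans (hj ζ (mem_sphere_zero_iff_norm.2 hζ))⟩
  obtain ⟨ε, hall, hε⟩ :=
    ((eventually_forall_of_forall_eventually_prod_nhds hlocal).and eventually_mem_nhdsWithin).exists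
  exact ⟨ε, hε, 1 / 2, one_half_pos, by norm_num, hall⟩
end
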